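/- arXiv:0810.2384 — 2 statements merged into one kernel-verified Lean document; each statement's English description precedes it below -/
import Mathlib

section
/- Let Q be a finite p-group with an automorphism ζ of order 3 satisfying C_Q(ζ) = 1, and let Q = Q₁ ≥ Q₂ ≥ ... be the lower central series. Then for every x ∈ Q and every i, the product x·ζ(x)·ζ²(x) lies in Q_{i+1} whenever x ∈ Q_i. -/
/-!
Since `ζ` is fixed-point-free, `x ↦ x / ζ x` is injective, hence onto the finite group `Q`; on
`g = x / ζ x` the product `g · ζ g · ζ² g` telescopes to `x / ζ³ x = 1`. So `x · ζ x · ζ² x` is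
trivial for every `x`, and in particular lies in every term of the lower central series.
-/

theorem MonoidHom.FixedPointFree.mul_apply_mul_apply_apply_eq_one {G : Type*} [Group G]
    [Finite G] {φ : MulAut G} (hφ : MonoidHom.FixedPointFree φ) (h3 : φ ^ 3 = 1) (g : G) :
    g * φ g * φ (φ g) = 1 := by
  have hiter : (⇑φ)^[3] = _root_.id := by
    ext x
    simpa [pow_succ] using DFunLike.congr_fun h3 x
  simpa [List.range_succ, mul_assoc] using hφ.prod_pow_eq_one hiter g

theorem stmt4_general {Q : Type*} [Group Q] [Finite Q] (ζ : MulAut Q) (hord : orderOf ζ = 3)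
    (hfix : ∀ x : Q, ζ x = x → x = 1) :
    ∀ (i : ℕ) (x : Q), x ∈ (⊤ : Subgroup Q).lowerCentralSeries i →
      x * ζ x * ζ (ζ x) ∈ (⊤ : Subgroup Q).lowerCentralSeries (i + 1) := by
  intro i x _
  rw [MonoidHom.FixedPointFree.mul_apply_mul_apply_apply_eq_one hfix
    (hord ▸ pow_orderOf_eq_one ζ) x]
  exact one_mem _

/-- If a finite `p`-group `Q` has an automorphism `ζ` of order 3 with trivial
fixed points, and `Q = Q₁ ≥ Q₂ ≥ ...` is the lower central series
(`Q_{i+1} = lowerCentralSeries Q i` in Mathlib's 0-based indexing), then for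
every `i` and every `x ∈ Q_{i+1}`, the product `x·ζ(x)·ζ²(x)` lies in `Q_{i+2}`. -/
theorem stmt4 {Q : Type*} [Group Q] [Finite Q] {p : ℕ} (hp : p.Prime)
    (hQ : IsPGroup p Q) (ζ : MulAut Q) (hord : orderOf ζ = 3)
    (hfix : ∀ x : Q, ζ x = x → x = 1) :
    ∀ (i : ℕ) (x : Q), x ∈ (⊤ : Subgroup Q).lowerCentralSeries i →
      x * ζ x * ζ (ζ x) ∈ (⊤ : Subgroup Q).lowerCentralSeries (i + 1) :=
  stmt4_general ζ hord hfix
end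

section
/- Let Q be a finite p-group with an automorphism ζ of order 3 satisfying C_Q(ζ) = 1, and suppose x, y ∈ Q lie in terms Q_i, Q_j of the lower central series respectively. Then [x, ζ(y)] ≡ [ζ(x), y] ≡ ζ²([x,y]) modulo Q_{i+j+1}. -/
/-!
Modulo `N = γ_{i+j+2}` the commutator pairing `γ_i × γ_j → γ_{i+j+1}/N` is central and biadditive,
because `⁅γ_i, γ_j⁆ ≤ γ_{i+j+1}` by the three subgroups lemma. A fixed-point-free automorphism `ζ`
of order 3 of a finite group satisfies `g * ζ g * ζ (ζ g) = 1` for every `g`, so the array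
`a r s = ⁅ζ^r x, ζ^s y⁆` has trivial row and column products (biadditivity) and trivial diagonal
products (`ζ`-equivariance of the commutator). An integer combination of six of these relations
shows that `a 0 1 / a 1 0` has order dividing 3, and `|Q| ≡ 1 (mod 3)` forces it to be trivial:
`⁅x, ζ y⁆ ≡ ⁅ζ x, y⁆`. The same congruence for the pair `(ζ² x, ζ y)` reads
`ζ² ⁅x, y⁆ = ⁅ζ² x, ζ² y⁆ ≡ ⁅x, ζ y⁆`.
-/

open Subgroup
open scoped commutatorElement IsMulCommutative

namespace Subgroup

variable {G : Type*} [Group G]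

theorem commutator_commutator_le_of_rotate {H₁ H₂ H₃ N : Subgroup G} [N.Normal]
    (h₁ : ⁅⁅H₂, H₃⁆, H₁⁆ ≤ N) (h₂ : ⁅⁅H₃, H₁⁆, H₂⁆ ≤ N) : ⁅⁅H₁, H₂⁆, H₃⁆ ≤ N := by
  have hbot (K : Subgroup G) : K.map (QuotientGroup.mk' N) = ⊥ ↔ K ≤ N := by
    rw [map_eq_bot_iff, QuotientGroup.ker_mk']
  rw [← hbot, map_commutator, map_commutator] at h₁ h₂ ⊢
  exact commutator_commutator_eq_bot_of_rotate h₁ h₂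

theorem commutator_lowerCentralSeries_le (i j : ℕ) :
    ⁅(⊤ : Subgroup G).lowerCentralSeries i, (⊤ : Subgroup G).lowerCentralSeries j⁆ ≤
      (⊤ : Subgroup G).lowerCentralSeries (i + j + 1) := by
  induction j generalizing i with
  | zero => rfl
  | succ j ih =>
    rw [lowerCentralSeries_succ, commutator_comm]
    refine commutator_commutator_le_of_rotate ?_ ?_
    · rw [commutator_comm ⊤, ← lowerCentralSeries_succ]
      simpa [add_right_comm _ 1 j, add_assoc] using ih (i + 1)
    · rw [show i + (j + 1) + 1 = i + j + 1 + 1 by omega, lowerCentralSeries_succ]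
      exact commutator_mono (ih i) le_rfl

theorem Characteristic.apply_mem {H : Subgroup G} [hH : H.Characteristic] (ζ : MulAut G) {g : G}
    (hg : g ∈ H) : ζ g ∈ H :=
  characteristic_iff_le_comap.mp hH ζ hg

end Subgroup

theorem QuotientGroup.mk_mem_center_of_commutator_le {G : Type*} [Group G] {N H : Subgroup G}
    [N.Normal] (hH : ⁅H, ⊤⁆ ≤ N) {g : G} (hg : g ∈ H) : (g : G ⧸ N) ∈ center (G ⧸ N) := by
  refine mem_center_iff.mpr fun h => ?_
  induction h using QuotientGroup.induction_on with | H h => ?_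
  have h_one : ((⁅g, h⁆ : G) : G ⧸ N) = 1 :=
    (QuotientGroup.eq_one_iff _).mpr (hH (commutator_mem_commutator hg (mem_top h)))
  rw [eq_comm, ← commutatorElement_eq_one_iff_mul_comm]
  simpa [commutatorElement_def] using h_one

theorem commutatorElement_mul_left_of_mem_center {G : Type*} [Group G] {a b c : G}
    (h : ⁅b, c⁆ ∈ center G) : ⁅a * b, c⁆ = ⁅a, c⁆ * ⁅b, c⁆ := by
  calc ⁅a * b, c⁆ = a * ⁅b, c⁆ * a⁻¹ * ⁅a, c⁆ := by simp [commutatorElement_def]; group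
    _ = ⁅a, c⁆ * ⁅b, c⁆ := by rw [mem_center_iff.mp h a, mul_inv_cancel_right, mem_center_iff.mp h]

theorem commutatorElement_mul_right_of_mem_center {G : Type*} [Group G] {a b c : G}
    (h : ⁅a, c⁆ ∈ center G) : ⁅a, b * c⁆ = ⁅a, b⁆ * ⁅a, c⁆ := by
  calc ⁅a, b * c⁆ = ⁅a, b⁆ * (b * ⁅a, c⁆ * b⁻¹) := by simp [commutatorElement_def]; group
    _ = ⁅a, b⁆ * ⁅a, c⁆ := by rw [mem_center_iff.mp h b, mul_inv_cancel_right]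

theorem three_nsmul_eq_of_lineSums_eq_zero {A : Type*} [AddCommGroup A] (a : ℕ → ℕ → A)
    (hrow : ∀ r s, a r s + a r (s + 1) + a r (s + 2) = 0)
    (hcol : ∀ r s, a r s + a (r + 1) s + a (r + 2) s = 0)
    (hdiag : ∀ r s, a r s + a (r + 1) (s + 1) + a (r + 2) (s + 2) = 0)
    (hper : ∀ r s, a r (s + 3) = a r s) :
    3 • a 0 1 = 3 • a 1 0 := by
  have R₁ : a 1 0 + a 1 1 + a 1 2 = 0 := hrow 1 0
  have R₂ : a 2 0 + a 2 1 + a 2 2 = 0 := hrow 2 0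
  have C₀ : a 0 0 + a 1 0 + a 2 0 = 0 := hcol 0 0
  have C₁ : a 0 1 + a 1 1 + a 2 1 = 0 := hcol 0 1
  have D₀ : a 0 0 + a 1 1 + a 2 2 = 0 := hdiag 0 0
  have D₁ : a 0 1 + a 1 2 + a 2 0 = 0 := hper 2 0 ▸ hdiag 0 1
  linear_combination (norm := module) C₁ + D₀ + 2 • D₁ - 2 • R₁ - R₂ - C₀

theorem pow_three_eq_of_lineProds_eq_one {M : Type*} [Group M] (a : ℕ → ℕ → M)
    (hcen : ∀ r s, a r s ∈ center M)
    (hrow : ∀ r s, a r s * a r (s + 1) * a r (s + 2) = 1)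
    (hcol : ∀ r s, a r s * a (r + 1) s * a (r + 2) s = 1)
    (hdiag : ∀ r s, a r s * a (r + 1) (s + 1) * a (r + 2) (s + 2) = 1)
    (hper : ∀ r s, a r (s + 3) = a r s) :
    a 0 1 ^ 3 = a 1 0 ^ 3 := by
  let b (r s : ℕ) : Additive (center M) := .ofMul ⟨a r s, hcen r s⟩
  have hb {r s r' s' r'' s'' : ℕ} (h : a r s * a r' s' * a r'' s'' = 1) :
      b r s + b r' s' + b r'' s'' = 0 :=
    congrArg Additive.ofMul (Subtype.ext h)
  have key := three_nsmul_eq_of_lineSums_eq_zero b (fun r s => hb (hrow r s))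
    (fun r s => hb (hcol r s)) (fun r s => hb (hdiag r s)) (fun r s => by simp only [b, hper])
  exact congrArg (fun z => ((Additive.toMul z : center M) : M)) key

theorem commutatorElement_pow_three_eq {M : Type*} [Group M] (U W : ℕ → M)
    (hU : ∀ r, U r * U (r + 1) * U (r + 2) = 1) (hW : ∀ s, W s * W (s + 1) * W (s + 2) = 1)
    (hW₃ : ∀ s, W (s + 3) = W s) (hcen : ∀ r s, ⁅U r, W s⁆ ∈ center M)
    (hdiag : ∀ r s, ⁅U r, W s⁆ * ⁅U (r + 1), W (s + 1)⁆ * ⁅U (r + 2), W (s + 2)⁆ = 1) :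
    ⁅U 0, W 1⁆ ^ 3 = ⁅U 1, W 0⁆ ^ 3 :=
  pow_three_eq_of_lineProds_eq_one (fun r s => ⁅U r, W s⁆) hcen
    (fun r s => by
      rw [← commutatorElement_mul_right_of_mem_center (hcen _ _),
        ← commutatorElement_mul_right_of_mem_center (hcen _ _), hW, commutatorElement_one_right])
    (fun r s => by
      rw [← commutatorElement_mul_left_of_mem_center (hcen _ _),
        ← commutatorElement_mul_left_of_mem_center (hcen _ _), hU, commutatorElement_one_left])
    hdiag (fun r s => congrArg _ (hW₃ s))

theorem MonoidHom.FixedPointFree.card_modEq_one {G : Type*} [Group G] [Finite G] {p : ℕ}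
    [Fact p.Prime] {ζ : MulAut G} (hζ : FixedPointFree ζ) (hp : orderOf ζ = p) :
    Nat.card G ≡ 1 [MOD p] := by
  have hpgroup : IsPGroup p (zpowers ζ) :=
    IsPGroup.of_card (n := 1) (by rw [Nat.card_zpowers, hp, pow_one])
  have hfixed : MulAction.fixedPoints (zpowers ζ) G = {1} := by
    ext g
    refine ⟨fun hg => hζ g (hg ⟨ζ, mem_zpowers ζ⟩), ?_⟩
    rintro rfl ⟨φ, _⟩
    exact map_one φ
  simpa [hfixed] using hpgroup.card_modEq_card_fixedPoints G

theorem mk_commutatorElement_apply_right_eq_apply_left {G : Type*} [Group G] [Finite G]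
    {ζ : MulAut G} (hζ : MonoidHom.FixedPointFree ζ) (h₃ : orderOf ζ = 3) {i j : ℕ} {a b : G}
    (ha : a ∈ (⊤ : Subgroup G).lowerCentralSeries i)
    (hb : b ∈ (⊤ : Subgroup G).lowerCentralSeries j) :
    ((⁅a, ζ b⁆ : G) : G ⧸ (⊤ : Subgroup G).lowerCentralSeries (i + j + 2)) = (⁅ζ a, b⁆ : G) := by
  set π := QuotientGroup.mk' ((⊤ : Subgroup G).lowerCentralSeries (i + j + 2))
  have hpow₃ : ζ ^ 3 = 1 := h₃ ▸ pow_orderOf_eq_one ζ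
  have hnorm (g : G) : g * ζ g * ζ (ζ g) = 1 := by
    simpa [List.range_succ, mul_assoc] using
      hζ.prod_pow_eq_one (n := 3) (funext fun g => DFunLike.congr_fun hpow₃ g) g
  have hsucc (r : ℕ) (g : G) : (ζ ^ (r + 1)) g = ζ ((ζ ^ r) g) := by
    rw [pow_succ', MulAut.mul_apply]
  have hcen {u w : G} (hu : u ∈ (⊤ : Subgroup G).lowerCentralSeries i)
      (hw : w ∈ (⊤ : Subgroup G).lowerCentralSeries j) : ⁅π u, π w⁆ ∈ center _ := by
    rw [← map_commutatorElement]
    exact QuotientGroup.mk_mem_center_of_commutator_le le_rfl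
      (commutator_lowerCentralSeries_le i j (commutator_mem_commutator hu hw))
  have hcubes := commutatorElement_pow_three_eq (fun r => π ((ζ ^ r) a)) (fun s => π ((ζ ^ s) b))
    (fun r => by simp only [hsucc, ← map_mul, hnorm, map_one])
    (fun s => by simp only [hsucc, ← map_mul, hnorm, map_one])
    (fun s => by rw [pow_add, hpow₃, mul_one])
    (fun r s => hcen (Characteristic.apply_mem _ ha) (Characteristic.apply_mem _ hb))
    (fun r s => by simp only [hsucc, ← map_commutatorElement, ← map_mul, hnorm, map_one])
  have hcop : (Nat.card (G ⧸ (⊤ : Subgroup G).lowerCentralSeries (i + j + 2))).Coprime 3 :=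
    Nat.Coprime.coprime_dvd_left (card_quotient_dvd_card _)
      (hζ.card_modEq_one h₃).gcd_eq
  have h := hcop.pow_left_bijective.injective hcubes
  simp only [pow_zero, pow_one, MulAut.one_apply, ← map_commutatorElement] at h
  exact h

theorem stmt19_general {Q : Type*} [Group Q] [Finite Q] (ζ : MulAut Q) (hord : orderOf ζ = 3)
    (hfix : ∀ x : Q, ζ x = x → x = 1) (i j : ℕ) (x y : Q)
    (hx : x ∈ Subgroup.lowerCentralSeries (⊤ : Subgroup Q) i) (hy : y ∈ Subgroup.lowerCentralSeries (⊤ : Subgroup Q) j) :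
    (x⁻¹ * (ζ y)⁻¹ * x * ζ y) * ((ζ x)⁻¹ * y⁻¹ * ζ x * y)⁻¹ ∈
        Subgroup.lowerCentralSeries (⊤ : Subgroup Q) (i + j + 2) ∧
    ((ζ x)⁻¹ * y⁻¹ * ζ x * y) * (ζ (ζ (x⁻¹ * y⁻¹ * x * y)))⁻¹ ∈
        Subgroup.lowerCentralSeries (⊤ : Subgroup Q) (i + j + 2) := by
  have hx' := inv_mem hx
  have hy' := inv_mem hy
  have hcomm (g h : Q) : g⁻¹ * h⁻¹ * g * h = ⁅g⁻¹, h⁻¹⁆ := by simp [commutatorElement_def]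
  have hζ₃ (g : Q) : ζ (ζ (ζ g)) = g := by
    simpa [pow_succ, MulAut.mul_apply] using DFunLike.congr_fun (hord ▸ pow_orderOf_eq_one ζ :) g
  rw [hcomm x (ζ y), hcomm (ζ x) y, hcomm x y]
  simp only [← map_inv, map_commutatorElement, ← div_eq_mul_inv, ← QuotientGroup.eq_iff_div_mem]
  have key := @mk_commutatorElement_apply_right_eq_apply_left _ _ _ ζ hfix hord i j
  refine ⟨key hx' hy', ?_⟩
  rw [key (Characteristic.apply_mem _ (Characteristic.apply_mem _ hx'))
    (Characteristic.apply_mem _ hy'), hζ₃, key hx' hy']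

/-- If a finite `p`-group `Q` has an automorphism `ζ` of order 3 with trivial
fixed points, `x ∈ Q_{i+1}` and `y ∈ Q_{j+1}` (terms of the lower central
series, `Q_{k+1} = lowerCentralSeries Q k`), then
`[x, ζ(y)] ≡ [ζ(x), y] ≡ ζ²([x,y])` modulo `Q_{(i+1)+(j+1)+1} = lowerCentralSeries Q (i+j+2)`,
where `[x,y] = x⁻¹y⁻¹xy`. -/
theorem stmt19 {Q : Type*} [Group Q] [Finite Q] {p : ℕ} (hp : p.Prime)
    (hQ : IsPGroup p Q) (ζ : MulAut Q) (hord : orderOf ζ = 3)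
    (hfix : ∀ x : Q, ζ x = x → x = 1) (i j : ℕ) (x y : Q)
    (hx : x ∈ Subgroup.lowerCentralSeries (⊤ : Subgroup Q) i) (hy : y ∈ Subgroup.lowerCentralSeries (⊤ : Subgroup Q) j) :
    (x⁻¹ * (ζ y)⁻¹ * x * ζ y) * ((ζ x)⁻¹ * y⁻¹ * ζ x * y)⁻¹ ∈
        Subgroup.lowerCentralSeries (⊤ : Subgroup Q) (i + j + 2) ∧
    ((ζ x)⁻¹ * y⁻¹ * ζ x * y) * (ζ (ζ (x⁻¹ * y⁻¹ * x * y)))⁻¹ ∈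
        Subgroup.lowerCentralSeries (⊤ : Subgroup Q) (i + j + 2) :=
  stmt19_general ζ hord hfix i j x y hx hy
end
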